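/- arXiv:2411.09057 — 3 statements merged into one kernel-verified Lean document; each statement's English description precedes it below -/
import Mathlib

section
/- Let $d \geq 1$ and let $f \in L^1(\mathbb{R}^d) \cap L^2(\mathbb{R}^d)$ be not almost everywhere zero. Let $E, S \subset \mathbb{R}^d$ be measurable sets of finite Lebesgue measure. Suppose $f(x) = 0$ for almost every $x \notin E$ and $\widehat{f}(\xi) = 0$ for almost every $\xi \notin S$. Then $|E| \cdot |S| \geq 1$. -/
open MeasureTheory FourierTransform

/-! Let `M = ‖f‖_∞`. Fourier inversion gives `M ≤ ‖𝓕 f‖₁`. Since `‖𝓕 f‖_∞ ≤ ‖f‖₁` and `𝓕 f`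
vanishes off `S`, `‖𝓕 f‖₁ ≤ |S| ‖f‖₁` (in particular `𝓕 f` is integrable, so inversion applies);
since `f` vanishes off `E`, `‖f‖₁ ≤ |E| M`. Thus `M ≤ |E| |S| M` with `0 < M < ∞`. -/

theorem lintegral_le_measure_mul_of_ae_le {α : Type*} [MeasurableSpace α] {μ : Measure α}
    {g : α → ENNReal} {s : Set α} {C : ENNReal} (hgs : ∀ᵐ x ∂μ, x ∉ s → g x = 0)
    (hgC : ∀ᵐ x ∂μ, g x ≤ C) : ∫⁻ x, g x ∂μ ≤ μ s * C := by
  have hg : g ≤ᵐ[μ] s.indicator fun _ ↦ C := by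
    filter_upwards [hgs, hgC] with x hxs hxC
    by_cases hx : x ∈ s
    · simpa [hx] using hxC
    · simp [hx, hxs hx]
  calc ∫⁻ x, g x ∂μ ≤ ∫⁻ x, s.indicator (fun _ ↦ C) x ∂μ := lintegral_mono_ae hg
    _ ≤ C * μ s := lintegral_indicator_const_le s C
    _ = μ s * C := mul_comm _ _

namespace Real

variable {V E : Type*} [NormedAddCommGroup V] [InnerProductSpace ℝ V] [FiniteDimensional ℝ V]
  [MeasurableSpace V] [BorelSpace V] [NormedAddCommGroup E] [NormedSpace ℂ E]

theorem enorm_fourier_le_lintegral_enorm (f : V → E) (w : V) : ‖𝓕 f w‖ₑ ≤ ∫⁻ v, ‖f v‖ₑ :=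
  (enorm_integral_le_lintegral_enorm _).trans_eq <| by
    simp only [← ofReal_norm, Circle.norm_smul]

theorem enorm_fourierInv_le_lintegral_enorm (f : V → E) (w : V) : ‖𝓕⁻ f w‖ₑ ≤ ∫⁻ v, ‖f v‖ₑ := by
  rw [fourierInv_eq_fourier_neg]
  exact enorm_fourier_le_lintegral_enorm f (-w)

theorem continuous_fourier_of_integrable {f : V → E} (hf : Integrable f) : Continuous (𝓕 f) :=
  VectorFourier.fourierIntegral_continuous continuous_fourierChar (innerSL ℝ).continuous₂ hf

theorem integral_fourier_mul_eq_of_integrable {f g : V → ℂ} (hf : Integrable f)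
    (hg : Integrable g) : ∫ ξ, 𝓕 f ξ * g ξ = ∫ x, f x * 𝓕 g x := by
  have hflip : (innerₗ V).flip = innerₗ V := by ext; simp
  have h := VectorFourier.integral_fourierIntegral_smul_eq_flip (L := innerₗ V)
    continuous_fourierChar continuous_inner hf hg
  simp only [hflip, smul_eq_mul] at h
  exact h

theorem integral_fourierInv_mul_eq_of_integrable {f g : V → ℂ} (hf : Integrable f)
    (hg : Integrable g) : ∫ ξ, 𝓕⁻ f ξ * g ξ = ∫ x, f x * 𝓕⁻ g x := by
  have hflip : (-innerₗ V).flip = -innerₗ V := by ext; simp [real_inner_comm]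
  have h := VectorFourier.integral_fourierIntegral_smul_eq_flip (L := -innerₗ V)
    continuous_fourierChar continuous_inner.neg hf hg
  simp only [hflip, smul_eq_mul] at h
  exact h

theorem fourierInv_fourier_ae_eq {f : V → ℂ} (hf : Integrable f) (h'f : Integrable (𝓕 f)) :
    𝓕⁻ (𝓕 f) =ᵐ[volume] f := by
  have hcont : Continuous (𝓕⁻ (𝓕 f)) := by
    rw [fourierInv_eq_fourier_comp_neg]
    exact continuous_fourier_of_integrable h'f.comp_neg
  refine ae_eq_of_integral_contDiff_smul_eq hcont.locallyIntegrable hf.locallyIntegrable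
    fun g hg hg_supp ↦ ?_
  -- Paired with the test function `g = 𝓕 ψ`, both sides become `∫ ψ * 𝓕 f`.
  let φ : SchwartzMap V ℂ :=
    (hg_supp.comp_left Complex.ofReal_zero).toSchwartzMap (Complex.ofRealCLM.contDiff.comp hg)
  let ψ : SchwartzMap V ℂ := 𝓕⁻ φ
  have hφ : ∀ x, φ x = g x := fun _ ↦ rfl
  have hψ : ∀ x, 𝓕 (ψ : V → ℂ) x = g x := by
    intro x
    rw [← SchwartzMap.fourier_coe, fourier_fourierInv_eq, hφ]
  calc ∫ x, g x • 𝓕⁻ (𝓕 f) x = ∫ x, φ x * 𝓕⁻ (𝓕 f) x := by simp only [hφ, Complex.real_smul]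
    _ = ∫ ξ, 𝓕⁻ (φ : V → ℂ) ξ * 𝓕 f ξ :=
      (integral_fourierInv_mul_eq_of_integrable φ.integrable h'f).symm
    _ = ∫ ξ, ψ ξ * 𝓕 f ξ := by rw [SchwartzMap.fourierInv_coe]
    _ = ∫ x, 𝓕 (ψ : V → ℂ) x * f x :=
      (integral_fourier_mul_eq_of_integrable ψ.integrable hf).symm
    _ = ∫ x, g x • f x := by simp only [hψ, Complex.real_smul]

theorem eLpNormEssSup_le_lintegral_enorm_fourier {f : V → ℂ} (hf : Integrable f)
    (h'f : Integrable (𝓕 f)) : eLpNormEssSup f volume ≤ ∫⁻ ξ, ‖𝓕 f ξ‖ₑ := by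
  rw [← eLpNormEssSup_congr_ae (fourierInv_fourier_ae_eq hf h'f)]
  exact essSup_le_of_ae_le _ (ae_of_all _ (enorm_fourierInv_le_lintegral_enorm _))

theorem lintegral_enorm_fourier_le_measure_mul {f : V → E} {S : Set V} (hfS : ∀ᵐ ξ, ξ ∉ S → 𝓕 f ξ = 0) :
    ∫⁻ ξ, ‖𝓕 f ξ‖ₑ ≤ volume S * ∫⁻ x, ‖f x‖ₑ :=
  lintegral_le_measure_mul_of_ae_le (by filter_upwards [hfS] with ξ h hξ; simp [h hξ])
    (ae_of_all _ (enorm_fourier_le_lintegral_enorm f))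

end Real

theorem statement0_general (d : ℕ)
    (f : EuclideanSpace ℝ (Fin d) → ℂ)
    (hf1 : Integrable f volume)
    (hf0 : ¬ (f =ᵐ[volume] 0))
    (E S : Set (EuclideanSpace ℝ (Fin d)))
    (hSfin : volume S < ⊤)
    (hfE : ∀ᵐ x ∂volume, x ∉ E → f x = 0)
    (hfS : ∀ᵐ ξ ∂volume, ξ ∉ S → 𝓕 f ξ = 0) :
    1 ≤ volume E * volume S := by
  set M := eLpNormEssSup f volume
  have hFS := Real.lintegral_enorm_fourier_le_measure_mul hfS
  have hF : Integrable (𝓕 f) :=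
    ⟨(Real.continuous_fourier_of_integrable hf1).aestronglyMeasurable,
      hFS.trans_lt (ENNReal.mul_lt_top hSfin hf1.2)⟩
  have hfM : ∫⁻ x, ‖f x‖ₑ ≤ volume E * M :=
    lintegral_le_measure_mul_of_ae_le (by filter_upwards [hfE] with x h hx; simp [h hx])
      ae_le_eLpNormEssSup
  have hMF : M ≤ ∫⁻ ξ, ‖𝓕 f ξ‖ₑ := Real.eLpNormEssSup_le_lintegral_enorm_fourier hf1 hF
  have hM0 : M ≠ 0 := mt eLpNormEssSup_eq_zero_iff.1 hf0
  have hMtop : M ≠ ⊤ := (hMF.trans_lt hF.2).ne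
  rw [← ENNReal.mul_le_mul_iff_left hM0 hMtop, one_mul]
  calc M ≤ volume S * (volume E * M) := hMF.trans (hFS.trans (by gcongr))
    _ = volume E * volume S * M := by ring

/-- Uncertainty principle on ℝ^d: if `f ∈ L¹ ∩ L²` is nonzero, supported (a.e.) on `E`,
and its Fourier transform is supported (a.e.) on `S`, both of finite Lebesgue measure,
then `|E| ⬝ |S| ≥ 1`. -/
theorem statement0 (d : ℕ) (hd : 1 ≤ d)
    (f : EuclideanSpace ℝ (Fin d) → ℂ)
    (hf1 : Integrable f volume) (hf2 : MemLp f 2 volume)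
    (hf0 : ¬ (f =ᵐ[volume] 0))
    (E S : Set (EuclideanSpace ℝ (Fin d)))
    (hE : MeasurableSet E) (hS : MeasurableSet S)
    (hEfin : volume E < ⊤) (hSfin : volume S < ⊤)
    (hfE : ∀ᵐ x ∂volume, x ∉ E → f x = 0)
    (hfS : ∀ᵐ ξ ∂volume, ξ ∉ S → 𝓕 f ξ = 0) :
    1 ≤ volume E * volume S :=
  statement0_general d f hf1 hf0 E S hSfin hfE hfS
end

section
/- Let $(M, \mu)$ be a measure space, let $(e_j)_{j \in J}$ be an orthonormal family in $L^2(M, \mu)$, let $X_S \subset J$ be a finite subset, and let $E \subset M$ be measurable. Suppose $f \in L^2(M,\mu)$ is not almost everywhere zero, is $L^2$-concentrated on $E$ at level $L = (1-\epsilon^2)^{-1/2}$ (equivalently $\|f - 1_E f\|_{L^2} \leq \epsilon \|f\|_{L^2}$), and its Fourier coefficients $\widehat{f}(j) = \langle f, e_j \rangle$ are $\ell^2$-concentrated on $X_S$ at level $L' = (1-\epsilon'^2)^{-1/2}$ (equivalently $\|f - \sum_{j \in X_S} \widehat f(j) e_j\|_{L^2} \leq \epsilon' \|f\|_{L^2}$),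 where $0 \leq \epsilon, \epsilon' < 1$ and $\epsilon + \epsilon' < 1$. Then $\int_E \sum_{j \in X_S} |e_j(x)|^2 \, d\mu(x) \geq (1 - \epsilon - \epsilon')^2$. -/
/-!
Put `F = ∑_{j ∈ X_S} ⟨f, e_j⟩ e_j`. Splitting `f = (f - 1_E f) + 1_E (f - F) + 1_E F` gives
`(1 - ε - ε') ‖f‖ ≤ ‖F‖_{L²(E)}`. Pointwise Cauchy–Schwarz bounds `|F|²` by
`(∑_{j ∈ X_S} |⟨f, e_j⟩|²) ∑_{j ∈ X_S} |e_j|²`, and Bessel's inequality bounds the first factor by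
`‖f‖²`; dividing by `‖f‖² ≠ 0` gives the claim.
-/

open MeasureTheory ComplexConjugate

theorem norm_sum_mul_sq_le {ι R : Type*} [SeminormedRing R] (s : Finset ι) (c z : ι → R) :
    ‖∑ i ∈ s, c i * z i‖ ^ 2 ≤ (∑ i ∈ s, ‖c i‖ ^ 2) * ∑ i ∈ s, ‖z i‖ ^ 2 := by
  calc ‖∑ i ∈ s, c i * z i‖ ^ 2 ≤ (∑ i ∈ s, ‖c i‖ * ‖z i‖) ^ 2 := by
        gcongr
        exact (norm_sum_le _ _).trans (Finset.sum_le_sum fun i _ => norm_mul_le _ _)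
    _ ≤ (∑ i ∈ s, ‖c i‖ ^ 2) * ∑ i ∈ s, ‖z i‖ ^ 2 := Finset.sum_mul_sq_le_sq_mul_sq _ _ _

namespace MeasureTheory

variable {α : Type*} [MeasurableSpace α] {μ : Measure α}

theorem MemLp.toReal_eLpNorm_two_sq {E : Type*} [NormedAddCommGroup E] {f : α → E}
    (hf : MemLp f 2 μ) : (eLpNorm f 2 μ).toReal ^ 2 = ∫ x, ‖f x‖ ^ 2 ∂μ := by
  have hint : 0 ≤ ∫ x, ‖f x‖ ^ 2 ∂μ := integral_nonneg fun x => by positivity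
  rw [hf.eLpNorm_eq_integral_rpow_norm two_ne_zero ENNReal.ofNat_ne_top,
    ENNReal.toReal_ofReal (by positivity), ENNReal.toReal_ofNat]
  simp only [Real.rpow_two]
  rw [← Real.rpow_natCast, ← Real.rpow_mul hint]
  norm_num

theorem eLpNorm_le_sub_indicator_add_sub_add_restrict {E : Type*} [NormedAddCommGroup E]
    {p : ENNReal} (hp : 1 ≤ p) {s : Set α} (hs : MeasurableSet s) {f g : α → E}
    (hf : AEStronglyMeasurable f μ) (hg : AEStronglyMeasurable g μ) :
    eLpNorm f p μ ≤
      eLpNorm (f - s.indicator f) p μ + eLpNorm (f - g) p μ + eLpNorm g p (μ.restrict s) := by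
  have hdecomp : f = (f - s.indicator f) + s.indicator (f - g) + s.indicator g := by
    ext x
    by_cases hx : x ∈ s <;> simp [hx]
  have hf' : AEStronglyMeasurable (f - s.indicator f) μ := hf.sub (hf.indicator hs)
  calc eLpNorm f p μ
      = eLpNorm ((f - s.indicator f) + s.indicator (f - g) + s.indicator g) p μ := by
        rw [← hdecomp]
    _ ≤ eLpNorm (f - s.indicator f) p μ + eLpNorm (s.indicator (f - g)) p μ
          + eLpNorm (s.indicator g) p μ := by
        refine (eLpNorm_add_le (hf'.add ((hf.sub hg).indicator hs)) (hg.indicator hs) hp).trans ?_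
        gcongr
        exact eLpNorm_add_le hf' ((hf.sub hg).indicator hs) hp
    _ ≤ eLpNorm (f - s.indicator f) p μ + eLpNorm (f - g) p μ + eLpNorm g p (μ.restrict s) := by
        rw [eLpNorm_indicator_eq_eLpNorm_restrict (f := g) hs]
        gcongr
        exact eLpNorm_indicator_le (f - g)

theorem toReal_eLpNorm_sum_mul_sq_le {ι R : Type*} [NormedRing R] (s : Finset ι) (c : ι → R)
    {e : ι → α → R} (he : ∀ i, MemLp (e i) 2 μ) :
    (eLpNorm (fun x => ∑ i ∈ s, c i * e i x) 2 μ).toReal ^ 2 ≤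
      (∑ i ∈ s, ‖c i‖ ^ 2) * ∫ x, ∑ i ∈ s, ‖e i x‖ ^ 2 ∂μ := by
  have hsum : MemLp (fun x => ∑ i ∈ s, c i * e i x) 2 μ :=
    memLp_finsetSum s fun i _ => (he i).const_mul (c i)
  rw [hsum.toReal_eLpNorm_two_sq, ← integral_const_mul]
  exact integral_mono (hsum.integrable_norm_pow two_ne_zero)
    ((integrable_finsetSum s fun i _ => (he i).integrable_norm_pow two_ne_zero).const_mul _)
    fun x => norm_sum_mul_sq_le s c (fun i => e i x)

theorem L2.inner_toLp_toLp {𝕜 E : Type*} [RCLike 𝕜] [NormedAddCommGroup E]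
    [InnerProductSpace 𝕜 E] {f g : α → E} (hf : MemLp f 2 μ) (hg : MemLp g 2 μ) :
    inner 𝕜 (hf.toLp f) (hg.toLp g) = ∫ x, inner 𝕜 (f x) (g x) ∂μ := by
  rw [L2.inner_def]
  refine integral_congr_ae ?_
  filter_upwards [hf.coeFn_toLp, hg.coeFn_toLp] with x hfx hgx
  rw [hfx, hgx]

theorem L2.inner_toLp_toLp_eq_integral_mul_conj {f g : α → ℂ} (hf : MemLp f 2 μ)
    (hg : MemLp g 2 μ) : inner ℂ (hf.toLp f) (hg.toLp g) = ∫ x, g x * conj (f x) ∂μ := by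
  simp [L2.inner_toLp_toLp]

theorem orthonormal_toLp_of_integral_mul_conj {ι : Type*} [DecidableEq ι] {e : ι → α → ℂ}
    (he : ∀ i, MemLp (e i) 2 μ)
    (horth : ∀ i j, ∫ x, e i x * conj (e j x) ∂μ = if i = j then 1 else 0) :
    Orthonormal ℂ fun i => (he i).toLp (e i) := by
  rw [orthonormal_iff_ite]
  intro i j
  rw [L2.inner_toLp_toLp_eq_integral_mul_conj, horth]
  simp only [eq_comm]

theorem sum_norm_integral_mul_conj_sq_le {ι : Type*} [DecidableEq ι] {e : ι → α → ℂ}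
    (he : ∀ i, MemLp (e i) 2 μ)
    (horth : ∀ i j, ∫ x, e i x * conj (e j x) ∂μ = if i = j then 1 else 0)
    (s : Finset ι) {f : α → ℂ} (hf : MemLp f 2 μ) :
    ∑ i ∈ s, ‖∫ x, f x * conj (e i x) ∂μ‖ ^ 2 ≤ (eLpNorm f 2 μ).toReal ^ 2 := by
  have := (orthonormal_toLp_of_integral_mul_conj he horth).sum_inner_products_le
    (s := s) (hf.toLp f)
  simpa only [L2.inner_toLp_toLp_eq_integral_mul_conj, Lp.norm_toLp] using this

end MeasureTheory

theorem statement6_general {M J : Type*} [MeasurableSpace M] [DecidableEq J] (μ : Measure M)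
    (e : J → M → ℂ) (he2 : ∀ j, MemLp (e j) 2 μ)
    (horth : ∀ i j, ∫ x, e i x * (starRingEnd ℂ) (e j x) ∂μ = if i = j then 1 else 0)
    (XS : Finset J) (E : Set M) (hE : MeasurableSet E)
    (f : M → ℂ) (hf : MemLp f 2 μ) (hf0 : ¬ (f =ᵐ[μ] 0))
    (ε ε' : ℝ) (hε0 : 0 ≤ ε) (hε'0 : 0 ≤ ε')
    (hsum : ε + ε' < 1)
    (hconc : eLpNorm (f - E.indicator f) 2 μ ≤ ENNReal.ofReal ε * eLpNorm f 2 μ)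
    (hspec : eLpNorm
        (f - fun x => ∑ j ∈ XS, (∫ y, f y * (starRingEnd ℂ) (e j y) ∂μ) * e j x) 2 μ
      ≤ ENNReal.ofReal ε' * eLpNorm f 2 μ) :
    (1 - ε - ε') ^ 2 ≤ ∫ x in E, ∑ j ∈ XS, ‖e j x‖ ^ 2 ∂μ := by
  set c : J → ℂ := fun j => ∫ y, f y * conj (e j y) ∂μ
  set F : M → ℂ := fun x => ∑ j ∈ XS, c j * e j x
  have hF : MemLp F 2 μ := memLp_finsetSum XS fun j _ => (he2 j).const_mul (c j)
  set n := (eLpNorm f 2 μ).toReal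
  set a := (eLpNorm F 2 (μ.restrict E)).toReal
  have hn : 0 < n :=
    ENNReal.toReal_pos (by rwa [Ne, eLpNorm_eq_zero_iff hf.1 two_ne_zero]) hf.2.ne
  have htri : n ≤ ε * n + ε' * n + a := by
    have h := (eLpNorm_le_sub_indicator_add_sub_add_restrict one_le_two hE hf.1 hF.1).trans
      (add_le_add_left (add_le_add hconc hspec) _)
    rwa [← ENNReal.ofReal_toReal hf.2.ne, ← ENNReal.ofReal_toReal (hF.restrict E).2.ne,
      ← ENNReal.ofReal_mul hε0, ← ENNReal.ofReal_mul hε'0, ← ENNReal.ofReal_add (by positivity)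
      (by positivity), ← ENNReal.ofReal_add (by positivity) ENNReal.toReal_nonneg,
      ENNReal.ofReal_le_ofReal_iff (by positivity)] at h
  have ha : a ^ 2 ≤ n ^ 2 * ∫ x in E, ∑ j ∈ XS, ‖e j x‖ ^ 2 ∂μ :=
    (toReal_eLpNorm_sum_mul_sq_le XS c fun j => (he2 j).restrict E).trans <|
      mul_le_mul_of_nonneg_right (sum_norm_integral_mul_conj_sq_le he2 horth XS hf)
        (integral_nonneg fun x => by positivity)
  have hlow : ((1 - ε - ε') * n) ^ 2 ≤ a ^ 2 := by gcongr <;> nlinarith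
  rw [mul_pow, mul_comm] at hlow
  exact le_of_mul_le_mul_left (hlow.trans ha) (by positivity)

/-- Proposition (manifold-free form): if a nonzero `f ∈ L²` is `L²`-concentrated on `E`
and its Fourier coefficients are `ℓ²`-concentrated on the finite set `X_S`, then
`∫_E ∑_{j ∈ X_S} |e_j(x)|² dμ(x) ≥ (1 - ε - ε')²`. -/
theorem statement6 {M J : Type*} [MeasurableSpace M] [DecidableEq J] (μ : Measure M)
    (e : J → M → ℂ) (he2 : ∀ j, MemLp (e j) 2 μ)
    (horth : ∀ i j, ∫ x, e i x * (starRingEnd ℂ) (e j x) ∂μ = if i = j then 1 else 0)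
    (XS : Finset J) (E : Set M) (hE : MeasurableSet E)
    (f : M → ℂ) (hf : MemLp f 2 μ) (hf0 : ¬ (f =ᵐ[μ] 0))
    (ε ε' : ℝ) (hε0 : 0 ≤ ε) (hε1 : ε < 1) (hε'0 : 0 ≤ ε') (hε'1 : ε' < 1)
    (hsum : ε + ε' < 1)
    (hconc : eLpNorm (f - E.indicator f) 2 μ ≤ ENNReal.ofReal ε * eLpNorm f 2 μ)
    (hspec : eLpNorm
        (f - fun x => ∑ j ∈ XS, (∫ y, f y * (starRingEnd ℂ) (e j y) ∂μ) * e j x) 2 μ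
      ≤ ENNReal.ofReal ε' * eLpNorm f 2 μ) :
    (1 - ε - ε') ^ 2 ≤ ∫ x in E, ∑ j ∈ XS, ‖e j x‖ ^ 2 ∂μ :=
  statement6_general μ e he2 horth XS E hE f hf hf0 ε ε' hε0 hε'0 hsum hconc hspec
end

section
/- Let $(M, \mu)$ be a measure space with $0 < \mu(M) < \infty$, let $(e_j)_{j \in J}$ be an orthonormal family in $L^2(M, \mu)$ with an associated eigenvalue map $\lambda : J \to \mathbb{R}$ such that each level set $\{j : \lambda_j = s\}$ is finite, and suppose that for every value $s$ in the range of $\lambda$, the function $x \mapsto \sum_{j : \lambda_j = s} |e_j(x)|^2$ is constant $\mu$-almost everywhere. Let $S$ be a finite subset of the range of $\lambda$, let $X_S = \{j : \lambda_j \in S\}$, and let $E \subset M$ be measurable. Suppose $f \in L^2(M,\mu)$ is not almost everywhere zero, satisfies $\|f - 1_E f\|_{L^2} \leq \epsilon \|f\|_{L^2}$ and $\|f - \sum_{j \in X_S} \langle f, e_j\rangle e_j\|_{L^2} \leq \epsilon' \|f\|_{L^2}$, with $0 \leq \epsilon, \epsilon' < 1$ and $\epsilon + \epsilon' < 1$.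 Then $(1 - \epsilon - \epsilon')^2 \leq \frac{\mu(E)}{\mu(M)} \cdot \# X_S$. -/
/-!
Let `g = ∑_{j ∈ X_S} ⟨f, e_j⟩ e_j`. Splitting `f = (f - 1_E f) + 1_E (f - g) + 1_E g` gives
`‖1_E g‖ ≥ (1 - ε - ε') ‖f‖`. On the other hand, homogeneity and `‖e_j‖ = 1` force
`∑_{j ∈ X_S} |e_j(x)|² = #X_S / μ(M)` almost everywhere, so Cauchy–Schwarz and Bessel give
`|g(x)|² ≤ ‖f‖² #X_S / μ(M)` a.e., whence `‖1_E g‖² ≤ ‖f‖² #X_S μ(E) / μ(M)`.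
-/

open MeasureTheory ENNReal
open scoped ComplexConjugate

lemma norm_sum_mul_sq_le_s8 {𝕜 J : Type*} [NormedRing 𝕜] (s : Finset J) (a b : J → 𝕜) :
    ‖∑ j ∈ s, a j * b j‖ ^ 2 ≤ (∑ j ∈ s, ‖a j‖ ^ 2) * ∑ j ∈ s, ‖b j‖ ^ 2 := by
  have h : ‖∑ j ∈ s, a j * b j‖ ≤ ∑ j ∈ s, ‖a j‖ * ‖b j‖ :=
    (norm_sum_le _ _).trans (Finset.sum_le_sum fun j _ => norm_mul_le _ _)
  exact (pow_le_pow_left₀ (norm_nonneg _) h 2).trans (Finset.sum_mul_sq_le_sq_mul_sq _ _ _)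

section
variable {M : Type*} [MeasurableSpace M] {μ : Measure M}

lemma lpNorm_two_sq {E : Type*} [NormedAddCommGroup E] {u : M → E}
    (hu : AEStronglyMeasurable u μ) : lpNorm u 2 μ ^ 2 = ∫ x, ‖u x‖ ^ 2 ∂μ := by
  rw [lpNorm_eq_integral_norm_rpow_toReal two_ne_zero ofNat_ne_top hu]
  have hI : 0 ≤ ∫ x, ‖u x‖ ^ (2 : ℝ) ∂μ := integral_nonneg fun _ => by positivity
  rw [toReal_ofNat, ← Real.rpow_natCast, ← Real.rpow_mul hI]
  norm_num

lemma lpNorm_le_mul_of_eLpNorm_le {E F : Type*} [NormedAddCommGroup E] [NormedAddCommGroup F]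
    {p : ℝ≥0∞} {f : M → E} {g : M → F} {a : ℝ} (hf : MemLp f p μ) (ha : 0 ≤ a)
    (h : eLpNorm g p μ ≤ ENNReal.ofReal a * eLpNorm f p μ) :
    lpNorm g p μ ≤ a * lpNorm f p μ := by
  by_cases hg : AEStronglyMeasurable g μ
  · rw [← ofReal_lpNorm hf, ← ENNReal.ofReal_mul ha] at h
    rw [← toReal_eLpNorm hg]
    exact ENNReal.toReal_le_of_le_ofReal (mul_nonneg ha lpNorm_nonneg) h
  · rw [lpNorm_of_not_aestronglyMeasurable hg]
    exact mul_nonneg ha lpNorm_nonneg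

section Indicator
variable {E : Type*} [NormedAddCommGroup E] {s : Set M}

lemma lpNorm_indicator_le {p : ℝ≥0∞} {u : M → E} (hs : MeasurableSet s) (hu : MemLp u p μ) :
    lpNorm (s.indicator u) p μ ≤ lpNorm u p μ := by
  rw [← toReal_eLpNorm hu.aestronglyMeasurable,
    ← toReal_eLpNorm (hu.aestronglyMeasurable.indicator hs)]
  exact ENNReal.toReal_mono hu.eLpNorm_ne_top (eLpNorm_indicator_le u)

lemma lpNorm_sub_sub_le_lpNorm_indicator {p : ℝ≥0∞} {f g : M → E} (hs : MeasurableSet s)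
    (hf : MemLp f p μ) (hg : MemLp g p μ) (hp : 1 ≤ p) :
    lpNorm f p μ - lpNorm (f - s.indicator f) p μ - lpNorm (f - g) p μ
      ≤ lpNorm (s.indicator g) p μ := by
  have hsplit : f = (f - s.indicator f) + (s.indicator (f - g) + s.indicator g) := by
    rw [Set.indicator_sub']; abel
  have h₁ := lpNorm_add_le (g := s.indicator (f - g) + s.indicator g)
    (hf.sub (hf.indicator hs)) hp
  have h₂ := lpNorm_add_le (g := s.indicator g) ((hf.sub hg).indicator hs) hp
  have h₃ := lpNorm_indicator_le (μ := μ) hs (hf.sub hg)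
  rw [← hsplit] at h₁
  linarith

lemma lpNorm_indicator_two_sq_le [IsFiniteMeasure μ] {u : M → E} (hs : MeasurableSet s)
    (hu : AEStronglyMeasurable u μ) {C : ℝ} (hC : ∀ᵐ x ∂μ, ‖u x‖ ^ 2 ≤ C) :
    lpNorm (s.indicator u) 2 μ ^ 2 ≤ C * (μ s).toReal := by
  rw [lpNorm_two_sq (hu.indicator hs)]
  calc ∫ x, ‖s.indicator u x‖ ^ 2 ∂μ = ∫ x, s.indicator (fun x => ‖u x‖ ^ 2) x ∂μ := by
        congr 1; ext x; by_cases hx : x ∈ s <;> simp [hx]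
    _ ≤ ∫ x, s.indicator (fun _ => C) x ∂μ := by
        refine integral_mono_of_nonneg (.of_forall fun x => ?_)
          ((integrable_const C).indicator hs) ?_
        · exact Set.indicator_nonneg (fun _ _ => by positivity) x
        · filter_upwards [hC] with x hx
          exact Set.indicator_le_indicator hx
    _ = C * (μ s).toReal := by
        rw [integral_indicator_const C hs, smul_eq_mul, mul_comm, measureReal_def]

end Indicator

lemma ae_sum_eq_const_of_fibres {J ι : Type*} [DecidableEq ι] {F : J → M → ℝ} {lam : J → ι}
    {T : ι → Finset J} (hT : ∀ s j, j ∈ T s ↔ lam j = s) {S : Finset ι} {X : Finset J}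
    (hX : ∀ j, j ∈ X ↔ lam j ∈ S) (h : ∀ s ∈ S, ∃ c : ℝ, ∀ᵐ x ∂μ, ∑ j ∈ T s, F j x = c) :
    ∃ c : ℝ, ∀ᵐ x ∂μ, ∑ j ∈ X, F j x = c := by
  choose! c hc using h
  refine ⟨∑ s ∈ S, c s, ?_⟩
  filter_upwards [(Filter.eventually_all_finset S).2 hc] with x hx
  have hfibre : ∀ s ∈ S, {j ∈ X | lam j = s} = T s := fun s hs => by
    ext j
    simp only [Finset.mem_filter, hX, hT]
    constructor
    · exact fun h => h.2
    · rintro rfl; exact ⟨hs, rfl⟩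
  rw [← Finset.sum_fiberwise_of_maps_to (fun j hj => (hX j).1 hj)]
  exact Finset.sum_congr rfl fun s hs => by rw [hfibre s hs, hx s hs]

lemma ae_sum_eq_card_div_of_integral_eq_one [IsFiniteMeasure μ] (hμ : μ Set.univ ≠ 0)
    {J : Type*} {φ : J → M → ℝ} {X : Finset J} (hφ : ∀ j ∈ X, Integrable (φ j) μ)
    (hφ1 : ∀ j ∈ X, ∫ x, φ j x ∂μ = 1) {c : ℝ} (hc : ∀ᵐ x ∂μ, ∑ j ∈ X, φ j x = c) :
    ∀ᵐ x ∂μ, ∑ j ∈ X, φ j x = X.card / (μ Set.univ).toReal := by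
  have hcard : (X.card : ℝ) = c * (μ Set.univ).toReal := by
    calc (X.card : ℝ) = ∫ x, ∑ j ∈ X, φ j x ∂μ := by
          rw [integral_finsetSum X hφ, Finset.sum_congr rfl hφ1]; simp
      _ = c * (μ Set.univ).toReal := by
          rw [integral_congr_ae hc, integral_const, smul_eq_mul, mul_comm, measureReal_def]
  have hμ' : (μ Set.univ).toReal ≠ 0 := ENNReal.toReal_ne_zero.2 ⟨hμ, measure_ne_top μ _⟩
  filter_upwards [hc] with x hx
  rw [hx, hcard, mul_div_cancel_right₀ _ hμ']

section Orthonormal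
variable {𝕜 J : Type*} [RCLike 𝕜] {e : J → M → 𝕜}

lemma inner_toLp_eq_integral_mul_conj {u v : M → 𝕜} (hu : MemLp u 2 μ) (hv : MemLp v 2 μ) :
    inner 𝕜 (hu.toLp u) (hv.toLp v) = ∫ x, v x * conj (u x) ∂μ := by
  rw [L2.inner_def]
  refine integral_congr_ae ?_
  filter_upwards [hu.coeFn_toLp, hv.coeFn_toLp] with x hux hvx
  rw [hux, hvx, RCLike.inner_apply]

variable [DecidableEq J]

lemma orthonormal_toLp_of_integral_mul_conj (he : ∀ j, MemLp (e j) 2 μ)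
    (horth : ∀ i j, ∫ x, e i x * conj (e j x) ∂μ = if i = j then 1 else 0) :
    Orthonormal 𝕜 fun j => (he j).toLp (e j) := by
  rw [orthonormal_iff_ite]
  intro i j
  rw [inner_toLp_eq_integral_mul_conj, horth]
  simp only [eq_comm]

lemma integral_norm_sq_eq_one_of_integral_mul_conj (he : ∀ j, MemLp (e j) 2 μ)
    (horth : ∀ i j, ∫ x, e i x * conj (e j x) ∂μ = if i = j then 1 else 0) (j : J) :
    ∫ x, ‖e j x‖ ^ 2 ∂μ = 1 := by
  rw [← lpNorm_two_sq (he j).aestronglyMeasurable, ← toReal_eLpNorm (he j).aestronglyMeasurable,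
    ← Lp.norm_toLp _ (he j), (orthonormal_toLp_of_integral_mul_conj he horth).1 j, one_pow]

lemma sum_norm_integral_mul_conj_sq_le (he : ∀ j, MemLp (e j) 2 μ)
    (horth : ∀ i j, ∫ x, e i x * conj (e j x) ∂μ = if i = j then 1 else 0)
    {f : M → 𝕜} (hf : MemLp f 2 μ) (s : Finset J) :
    ∑ j ∈ s, ‖∫ x, f x * conj (e j x) ∂μ‖ ^ 2 ≤ lpNorm f 2 μ ^ 2 := by
  have hBessel := (orthonormal_toLp_of_integral_mul_conj he horth).sum_inner_products_le
    (s := s) (hf.toLp f)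
  simpa only [inner_toLp_eq_integral_mul_conj, Lp.norm_toLp,
    toReal_eLpNorm hf.aestronglyMeasurable] using hBessel

lemma lpNorm_indicator_sum_integral_mul_conj_mul_sq_le [IsFiniteMeasure μ]
    (he : ∀ j, MemLp (e j) 2 μ)
    (horth : ∀ i j, ∫ x, e i x * conj (e j x) ∂μ = if i = j then 1 else 0)
    {f : M → 𝕜} (hf : MemLp f 2 μ) {s : Set M} (hs : MeasurableSet s) (X : Finset J) {K : ℝ}
    (hK : ∀ᵐ x ∂μ, ∑ j ∈ X, ‖e j x‖ ^ 2 ≤ K) :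
    lpNorm (s.indicator fun x => ∑ j ∈ X, (∫ y, f y * conj (e j y) ∂μ) * e j x) 2 μ ^ 2
      ≤ lpNorm f 2 μ ^ 2 * K * (μ s).toReal := by
  refine lpNorm_indicator_two_sq_le hs ?_ ?_
  · exact Finset.aestronglyMeasurable_fun_sum X fun j _ =>
      (he j).aestronglyMeasurable.const_mul _
  · filter_upwards [hK] with x hx
    exact (norm_sum_mul_sq_le_s8 _ _ _).trans (mul_le_mul
      (sum_norm_integral_mul_conj_sq_le he horth hf X) hx (by positivity) (by positivity))

end Orthonormal

end

theorem statement8_general {M J : Type*} [MeasurableSpace M] [DecidableEq J] (μ : Measure M)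
    (hM0 : 0 < μ Set.univ) (hMfin : μ Set.univ < ⊤)
    (e : J → M → ℂ) (lam : J → ℝ)
    (he2 : ∀ j, MemLp (e j) 2 μ)
    (horth : ∀ i j, ∫ x, e i x * (starRingEnd ℂ) (e j x) ∂μ = if i = j then 1 else 0)
    (T : ℝ → Finset J) (hT : ∀ s j, j ∈ T s ↔ lam j = s)
    (hhom : ∀ s ∈ Set.range lam, ∃ c : ℝ, ∀ᵐ x ∂μ, ∑ j ∈ T s, ‖e j x‖ ^ 2 = c)
    (S : Finset ℝ) (hS : ↑S ⊆ Set.range lam)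
    (XS : Finset J) (hXS : ∀ j, j ∈ XS ↔ lam j ∈ S)
    (E : Set M) (hE : MeasurableSet E)
    (f : M → ℂ) (hf : MemLp f 2 μ) (hf0 : ¬ (f =ᵐ[μ] 0))
    (ε ε' : ℝ) (hε0 : 0 ≤ ε) (hε'0 : 0 ≤ ε')
    (hsum : ε + ε' < 1)
    (hconc : eLpNorm (f - E.indicator f) 2 μ ≤ ENNReal.ofReal ε * eLpNorm f 2 μ)
    (hspec : eLpNorm
        (f - fun x => ∑ j ∈ XS, (∫ y, f y * (starRingEnd ℂ) (e j y) ∂μ) * e j x) 2 μ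
      ≤ ENNReal.ofReal ε' * eLpNorm f 2 μ) :
    (1 - ε - ε') ^ 2 ≤ (μ E).toReal / (μ Set.univ).toReal * XS.card := by
  have : IsFiniteMeasure μ := ⟨hMfin⟩
  set g := fun x => ∑ j ∈ XS, (∫ y, f y * conj (e j y) ∂μ) * e j x
  have hg : MemLp g 2 μ := memLp_finsetSum XS fun j _ => (he2 j).const_mul _
  have hN : 0 < lpNorm f 2 μ :=
    lpNorm_nonneg.lt_of_ne' fun h => hf0 ((lpNorm_eq_zero hf two_ne_zero).1 h)
  have hlower : (1 - ε - ε') * lpNorm f 2 μ ≤ lpNorm (E.indicator g) 2 μ := by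
    have := lpNorm_sub_sub_le_lpNorm_indicator hE hf hg one_le_two
    have := lpNorm_le_mul_of_eLpNorm_le hf hε0 hconc
    have := lpNorm_le_mul_of_eLpNorm_le hf hε'0 hspec
    linarith
  obtain ⟨c, hc⟩ := ae_sum_eq_const_of_fibres hT hXS fun s hs => hhom s (hS hs)
  have hXScard := ae_sum_eq_card_div_of_integral_eq_one hM0.ne'
    (fun j _ => (he2 j).integrable_norm_pow two_ne_zero)
    (fun j _ => integral_norm_sq_eq_one_of_integral_mul_conj he2 horth j) hc
  have hupper := lpNorm_indicator_sum_integral_mul_conj_mul_sq_le he2 horth hf hE XS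
    (hXScard.mono fun x hx => hx.le)
  have hsq : ((1 - ε - ε') * lpNorm f 2 μ) ^ 2
      ≤ lpNorm f 2 μ ^ 2 * ((μ E).toReal / (μ Set.univ).toReal * XS.card) := by
    calc _ ≤ lpNorm (E.indicator g) 2 μ ^ 2 := pow_le_pow_left₀ (mul_nonneg (by linarith) hN.le) hlower 2
      _ ≤ _ := hupper
      _ = _ := by ring
  rw [mul_pow, mul_comm] at hsq
  exact le_of_mul_le_mul_left hsq (by positivity)

/-- Uncertainty principle on "homogeneous" systems: let `(e_j)` be an orthonormal family
with eigenvalue map `λ : J → ℝ` whose level sets `T s = {j : λ_j = s}` are finite, such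
that `∑_{λ_j = s} |e_j(x)|²` is a.e. constant for every `s` in the range of `λ`. If a
nonzero `f ∈ L²` is `L²`-concentrated on `E` at level `(1-ε²)^{-1/2}` and spectrally
concentrated on `X_S = {j : λ_j ∈ S}` at level `(1-ε'²)^{-1/2}`, then
`(1-ε-ε')² ≤ (μ(E)/μ(M)) ⬝ #X_S`. -/
theorem statement8 {M J : Type*} [MeasurableSpace M] [DecidableEq J] (μ : Measure M)
    (hM0 : 0 < μ Set.univ) (hMfin : μ Set.univ < ⊤)
    (e : J → M → ℂ) (lam : J → ℝ)
    (he2 : ∀ j, MemLp (e j) 2 μ)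
    (horth : ∀ i j, ∫ x, e i x * (starRingEnd ℂ) (e j x) ∂μ = if i = j then 1 else 0)
    (T : ℝ → Finset J) (hT : ∀ s j, j ∈ T s ↔ lam j = s)
    (hhom : ∀ s ∈ Set.range lam, ∃ c : ℝ, ∀ᵐ x ∂μ, ∑ j ∈ T s, ‖e j x‖ ^ 2 = c)
    (S : Finset ℝ) (hS : ↑S ⊆ Set.range lam)
    (XS : Finset J) (hXS : ∀ j, j ∈ XS ↔ lam j ∈ S)
    (E : Set M) (hE : MeasurableSet E)
    (f : M → ℂ) (hf : MemLp f 2 μ) (hf0 : ¬ (f =ᵐ[μ] 0))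
    (ε ε' : ℝ) (hε0 : 0 ≤ ε) (hε1 : ε < 1) (hε'0 : 0 ≤ ε') (hε'1 : ε' < 1)
    (hsum : ε + ε' < 1)
    (hconc : eLpNorm (f - E.indicator f) 2 μ ≤ ENNReal.ofReal ε * eLpNorm f 2 μ)
    (hspec : eLpNorm
        (f - fun x => ∑ j ∈ XS, (∫ y, f y * (starRingEnd ℂ) (e j y) ∂μ) * e j x) 2 μ
      ≤ ENNReal.ofReal ε' * eLpNorm f 2 μ) :
    (1 - ε - ε') ^ 2 ≤ (μ E).toReal / (μ Set.univ).toReal * XS.card :=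
  statement8_general μ hM0 hMfin e lam he2 horth T hT hhom S hS XS hXS E hE f hf hf0 ε ε' hε0 hε'0
    hsum hconc hspec
end
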